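/- For any policy π on the original goal-oriented MDP with extension π̄ to the augmented MDP, the regrets are equal: V^π(d₀) − V*(d₀) = V̄^{π̄}(d₀) − V̄*(d₀), where V* and V̄* are the optimal values of the original and augmented MDPs respectively. Consequently, an optimal policy of the augmented MDP yields (via restriction) an optimal policy of the original MDP. -/
import Mathlib


open scoped ENNReal
open Classical

/-- Expectation of a real-valued function under a probability mass function. -/
noncomputable def pexp {σ : Type*} (p : PMF σ) (φ : σ → ℝ) : ℝ :=
  ∑' s, (p s).toReal * φ s

/-- Transition kernel of the action-augmented MDP: states `Option X` (with `none` the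
absorbing state `s⁺`), actions `Option A` (with `none` the fictitious action `a⁺`).
Taking `a⁺` always transitions to `s⁺`; real actions follow the original dynamics;
`s⁺` is absorbing. -/
noncomputable def augP {X A : Type*} (P : X → A → PMF X) :
    Option X → Option A → PMF (Option X)
  | some x, some a => (P x a).map some
  | _, _ => PMF.pure none

/-- Reward of the action-augmented MDP: reward `1` exactly when taking the fictitious
action `a⁺` at a goal state; all other rewards are `0`. -/
noncomputable def augR {X A : Type*} (G : Set X) : Option X → Option A → ℝ
  | some x, none => if x ∈ G then 1 else 0
  | _, _ => 0

/-- Extension `π̄` of a policy `π` to the augmented MDP: play the fictitious action `a⁺`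
exactly on goal states, otherwise follow `π`. -/
noncomputable def extPi {X A : Type*} (G : Set X) (π : X → PMF A) :
    Option X → PMF (Option A)
  | some x => if x ∈ G then PMF.pure none else (π x).map some
  | none => PMF.pure none

section helpers

variable {σ : Type*} [Fintype σ] {φ ψ : σ → ℝ} {c : ℝ}

lemma pexp_eq_sum (p : PMF σ) (φ : σ → ℝ) : pexp p φ = ∑ s, (p s).toReal * φ s := by
  rw [pexp, tsum_fintype]

lemma pmf_sum_toReal (p : PMF σ) : ∑ s, (p s).toReal = 1 := by
  have h := p.tsum_coe
  rw [tsum_fintype] at h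
  rw [← ENNReal.toReal_sum (fun a _ => p.apply_ne_top a), h, ENNReal.toReal_one]

lemma pexp_congr (p : PMF σ) (h : ∀ s, φ s = ψ s) : pexp p φ = pexp p ψ := by
  rw [pexp_eq_sum, pexp_eq_sum]
  exact Finset.sum_congr rfl (fun s _ => by rw [h s])

lemma pexp_const (p : PMF σ) (c : ℝ) : pexp p (fun _ => c) = c := by
  rw [pexp_eq_sum, ← Finset.sum_mul, pmf_sum_toReal, one_mul]

lemma pexp_mono (p : PMF σ) (h : ∀ s, φ s ≤ ψ s) : pexp p φ ≤ pexp p ψ := by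
  rw [pexp_eq_sum, pexp_eq_sum]
  exact Finset.sum_le_sum fun s _ => mul_le_mul_of_nonneg_left (h s) ENNReal.toReal_nonneg

lemma pexp_le_const (p : PMF σ) (h : ∀ s, φ s ≤ c) : pexp p φ ≤ c :=
  le_of_le_of_eq (pexp_mono p h) (pexp_const p c)

lemma const_le_pexp (p : PMF σ) (h : ∀ s, c ≤ φ s) : c ≤ pexp p φ :=
  le_of_eq_of_le (pexp_const p c).symm (pexp_mono p h)

lemma pexp_add_const (p : PMF σ) (φ : σ → ℝ) (c : ℝ) :
    pexp p (fun s => φ s + c) = pexp p φ + c := by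
  simp only [pexp_eq_sum, mul_add, Finset.sum_add_distrib, ← Finset.sum_mul,
    pmf_sum_toReal, one_mul]

lemma pexp_neg (p : PMF σ) (φ : σ → ℝ) : pexp p (fun s => -φ s) = -pexp p φ := by
  simp only [pexp_eq_sum, mul_neg, ← Finset.sum_neg_distrib]

lemma pexp_pure (t : σ) (φ : σ → ℝ) : pexp (PMF.pure t) φ = φ t := by
  rw [pexp_eq_sum]
  simp [PMF.pure_apply, apply_ite, Finset.sum_ite_eq']

lemma pexp_map_some {X : Type*} [Fintype X] (p : PMF X) (φ : Option X → ℝ) :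
    pexp (p.map some) φ = pexp p (fun x => φ (some x)) := by
  rw [pexp_eq_sum, pexp_eq_sum, Fintype.sum_option]
  simp only [PMF.map_apply]
  have h1 : ∀ x : X, (∑' (a : X), if x = a then p a else 0) = p x := by
    intro x
    rw [tsum_eq_single x (fun b hb => by simp [Ne.symm hb])]
    simp
  simp [h1]

lemma fin_le_ciSup {α : Type*} [Fintype α] (f : α → ℝ) (a : α) : f a ≤ ⨆ b, f b :=
  le_ciSup ((Set.finite_range f).bddAbove) a

lemma contraction_nonpos {X : Type*} [Fintype X] [Nonempty X] {γ : ℝ}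
    (hγ1 : γ < 1) (h : X → ℝ)
    (H : ∀ M, 0 ≤ M → (∀ y, h y ≤ M) → ∀ x, h x ≤ γ * M) : ∀ x, h x ≤ 0 := by
  obtain ⟨x0, hx0⟩ := Finite.exists_max h
  intro x
  by_contra hc
  push_neg at hc
  have h0 : 0 < h x0 := lt_of_lt_of_le hc (hx0 x)
  have := H (h x0) h0.le hx0 x0
  nlinarith

lemma contraction_le_one {X : Type*} [Fintype X] [Nonempty X] {γ : ℝ}
    (hγ1 : γ < 1) (h : X → ℝ)
    (H : ∀ M, 0 ≤ M → (∀ y, h y ≤ M) → ∀ x, h x ≤ max 1 (γ * M)) : ∀ x, h x ≤ 1 := by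
  obtain ⟨x0, hx0⟩ := Finite.exists_max h
  intro x
  by_contra hc
  push_neg at hc
  have h0 : 1 < h x0 := lt_of_lt_of_le hc (hx0 x)
  have := H (h x0) (by linarith) hx0 x0
  rcases le_max_iff.mp this with h1 | h1 <;> nlinarith

lemma eq_zero_of_eq_mul {γ v : ℝ} (hγ1 : γ < 1) (h : v = γ * v) : v = 0 := by
  have h2 : (1 - γ) * v = 0 := by linear_combination h
  rcases mul_eq_zero.mp h2 with h3 | h3
  · linarith
  · exact h3

end helpers

/-- For any policy `π` on the original goal-oriented MDP with extension
`π̄` to the augmented MDP, the regrets are equal: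
`V^π(d₀) − V*(d₀) = V̄^{π̄}(d₀) − V̄*(d₀)`, where `V*` and `V̄*` are the optimal values
(characterized by the optimal Bellman equations `Qstar`, `Qbstar`) of the original and
augmented MDPs. Consequently, any optimal policy `ξ` of the augmented MDP yields, via
its restriction `ξ̲` to the original MDP, an optimal policy of the original MDP. -/
theorem stmt4 {X A : Type*} [Fintype X] [Fintype A] [Nonempty A]
    (G : Set X) (P : X → A → PMF X) (d0 : PMF X)
    (γ : ℝ) (hγ0 : 0 ≤ γ) (hγ1 : γ < 1)
    (π : X → PMF A)
    (Q : X → A → ℝ) (Qb : Option X → Option A → ℝ)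
    (hQ : ∀ x a, Q x a =
      if x ∈ G then 1 else γ * pexp (P x a) (fun x' => pexp (π x') (Q x')))
    (hQb : ∀ ox oa, Qb ox oa =
      augR G ox oa + γ * pexp (augP P ox oa) (fun ox' => pexp (extPi G π ox') (Qb ox')))
    (Qstar : X → A → ℝ)
    (hQstar : ∀ x a, Qstar x a =
      if x ∈ G then 1 else γ * pexp (P x a) (fun x' => ⨆ a' : A, Qstar x' a'))
    (Qbstar : Option X → Option A → ℝ)
    (hQbstar : ∀ ox oa, Qbstar ox oa =
      augR G ox oa + γ * pexp (augP P ox oa) (fun ox' => ⨆ oa' : Option A, Qbstar ox' oa')) :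
    (pexp d0 (fun x => pexp (π x) (Q x)) - pexp d0 (fun x => ⨆ a : A, Qstar x a)
      = pexp (d0.map some) (fun ox => pexp (extPi G π ox) (Qb ox))
        - pexp (d0.map some) (fun ox => ⨆ oa : Option A, Qbstar ox oa)) ∧
    (∀ (ξ : Option X → PMF (Option A)) (ξr : X → PMF A)
        (Qξ : Option X → Option A → ℝ) (Qr : X → A → ℝ),
      (∀ x a, ξr x a = ξ (some x) (some a) + ξ (some x) none / (Fintype.card A : ℝ≥0∞)) →
      (∀ ox oa, Qξ ox oa =
        augR G ox oa + γ * pexp (augP P ox oa) (fun ox' => pexp (ξ ox') (Qξ ox'))) →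
      (∀ x a, Qr x a =
        if x ∈ G then 1 else γ * pexp (P x a) (fun x' => pexp (ξr x') (Qr x'))) →
      pexp (d0.map some) (fun ox => pexp (ξ ox) (Qξ ox))
        = pexp (d0.map some) (fun ox => ⨆ oa : Option A, Qbstar ox oa) →
      pexp d0 (fun x => pexp (ξr x) (Qr x)) = pexp d0 (fun x => ⨆ a : A, Qstar x a)) := by
  have haugP_none : ∀ oa : Option A, augP P none oa = PMF.pure none := by
    intro oa; cases oa <;> rfl
  have haugP_sn : ∀ x : X, augP P (some x) (none : Option A) = PMF.pure none := fun _ => rfl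
  have haugP_ss : ∀ (x : X) (a : A), augP P (some x) (some a) = (P x a).map some :=
    fun _ _ => rfl
  have haugR_none : ∀ oa : Option A, augR G none oa = 0 := by intro oa; cases oa <;> rfl
  have haugR_sn : ∀ x : X, augR G (some x) (none : Option A) = if x ∈ G then 1 else 0 :=
    fun _ => rfl
  have haugR_ss : ∀ (x : X) (a : A), augR G (some x) (some a) = 0 := fun _ _ => rfl
  haveI hXne : Nonempty X := ⟨d0.support_nonempty.choose⟩
  set VP : X → ℝ := fun x => pexp (π x) (Q x) with hVPdef
  set VB : Option X → ℝ := fun ox => pexp (extPi G π ox) (Qb ox) with hVBdef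
  set VS : X → ℝ := fun x => ⨆ a : A, Qstar x a with hVSdef
  set VBS : Option X → ℝ := fun ox => ⨆ oa : Option A, Qbstar ox oa with hVBSdef
  -- value of the extended policy at the absorbing state
  have hVB_none : VB none = 0 := by
    have h1 : ∀ oa : Option A, Qb none oa = γ * VB none := by
      intro oa
      rw [hQb, haugR_none, haugP_none, pexp_pure]
      ring
    have h2 : VB none = γ * VB none := by
      have h3 : VB none = pexp (extPi G π none) (Qb none) := by rw [hVBdef]
      rw [pexp_congr _ h1, pexp_const] at h3
      exact h3
    exact eq_zero_of_eq_mul hγ1 h2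
  have hVB_G : ∀ x, x ∈ G → VB (some x) = 1 := by
    intro x hx
    have h3 : VB (some x) = pexp (extPi G π (some x)) (Qb (some x)) := by rw [hVBdef]
    rw [h3, show extPi G π (some x) = if x ∈ G then PMF.pure none else (π x).map some from rfl,
      if_pos hx, pexp_pure, hQb, haugR_sn, if_pos hx, haugP_sn, pexp_pure, hVB_none]
    ring
  have hVB_nG : ∀ x, x ∉ G →
      VB (some x) = pexp (π x) (fun a => γ * pexp (P x a) (fun y => VB (some y))) := by
    intro x hx
    have h3 : VB (some x) = pexp ((π x).map some) (Qb (some x)) := by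
      rw [hVBdef]
      simp only
      rw [show extPi G π (some x) = if x ∈ G then PMF.pure none else (π x).map some from rfl,
        if_neg hx]
    rw [h3, pexp_map_some]
    refine pexp_congr _ (fun a => ?_)
    rw [hQb, haugR_ss, haugP_ss, pexp_map_some]
    ring
  have hVP_G : ∀ x, x ∈ G → VP x = 1 := by
    intro x hx
    have h3 : VP x = pexp (π x) (Q x) := by rw [hVPdef]
    have h2 : ∀ a : A, Q x a = (fun _ : A => (1 : ℝ)) a := fun a => by rw [hQ, if_pos hx]
    rw [h3, pexp_congr _ h2, pexp_const]
  have hVP_nG : ∀ x, x ∉ G → VP x = pexp (π x) (fun a => γ * pexp (P x a) VP) := by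
    intro x hx
    have h3 : VP x = pexp (π x) (Q x) := by rw [hVPdef]
    rw [h3]
    refine pexp_congr _ (fun a => ?_)
    rw [hQ, if_neg hx]
  have hd1 : ∀ x, VB (some x) - VP x ≤ 0 := by
    refine contraction_nonpos hγ1 _ (fun M hM hall x => ?_)
    by_cases hx : x ∈ G
    · rw [hVB_G x hx, hVP_G x hx]
      simpa using mul_nonneg hγ0 hM
    · have key : ∀ a : A, γ * pexp (P x a) (fun y => VB (some y))
          ≤ (fun a => γ * pexp (P x a) VP) a + γ * M := by
        intro a
        have h1 : pexp (P x a) (fun y => VB (some y)) ≤ pexp (P x a) (fun y => VP y + M) :=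
          pexp_mono _ (fun y => by linarith [hall y])
        rw [pexp_add_const] at h1
        simp only
        nlinarith [mul_le_mul_of_nonneg_left h1 hγ0]
      have hcalc : pexp (π x) (fun a => γ * pexp (P x a) (fun y => VB (some y)))
          ≤ VP x + γ * M := by
        calc pexp (π x) (fun a => γ * pexp (P x a) (fun y => VB (some y)))
            ≤ pexp (π x) (fun a => γ * pexp (P x a) VP + γ * M) := pexp_mono _ key
          _ = pexp (π x) (fun a => γ * pexp (P x a) VP) + γ * M := pexp_add_const _ _ _
          _ = VP x + γ * M := by rw [← hVP_nG x hx]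
      rw [hVB_nG x hx]
      linarith
  have hd2 : ∀ x, VP x - VB (some x) ≤ 0 := by
    refine contraction_nonpos hγ1 _ (fun M hM hall x => ?_)
    by_cases hx : x ∈ G
    · rw [hVB_G x hx, hVP_G x hx]
      simpa using mul_nonneg hγ0 hM
    · have key : ∀ a : A, γ * pexp (P x a) VP
          ≤ (fun a => γ * pexp (P x a) (fun y => VB (some y))) a + γ * M := by
        intro a
        have h1 : pexp (P x a) VP ≤ pexp (P x a) (fun y => VB (some y) + M) :=
          pexp_mono _ (fun y => by linarith [hall y])
        rw [pexp_add_const] at h1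
        simp only
        nlinarith [mul_le_mul_of_nonneg_left h1 hγ0]
      have hcalc : pexp (π x) (fun a => γ * pexp (P x a) VP)
          ≤ VB (some x) + γ * M := by
        calc pexp (π x) (fun a => γ * pexp (P x a) VP)
            ≤ pexp (π x) (fun a => γ * pexp (P x a) (fun y => VB (some y)) + γ * M) :=
              pexp_mono _ key
          _ = pexp (π x) (fun a => γ * pexp (P x a) (fun y => VB (some y))) + γ * M :=
              pexp_add_const _ _ _
          _ = VB (some x) + γ * M := by rw [← hVB_nG x hx]
      rw [hVP_nG x hx]
      linarith
  have hVBeq : ∀ x, VB (some x) = VP x := fun x =>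
    le_antisymm (by linarith [hd1 x]) (by linarith [hd2 x])
  -- the optimal values
  have hVBS_none : VBS none = 0 := by
    have h1 : ∀ oa : Option A, Qbstar none oa = γ * VBS none := by
      intro oa
      rw [hQbstar, haugR_none, haugP_none, pexp_pure]
      ring
    have h2 : VBS none = γ * VBS none := by
      have h3 : VBS none = ⨆ oa : Option A, Qbstar none oa := by rw [hVBSdef]
      simp only [h1, ciSup_const] at h3
      exact h3
    exact eq_zero_of_eq_mul hγ1 h2
  have hQbs1 : ∀ x, Qbstar (some x) none = if x ∈ G then 1 else 0 := by
    intro x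
    rw [hQbstar, haugR_sn, haugP_sn, pexp_pure, hVBS_none]
    ring
  have hQbs2 : ∀ x a, Qbstar (some x) (some a) = γ * pexp (P x a) (fun y => VBS (some y)) := by
    intro x a
    rw [hQbstar, haugR_ss, haugP_ss, pexp_map_some]
    ring
  have hQleVBS : ∀ (x : X) (oa : Option A), Qbstar (some x) oa ≤ VBS (some x) := by
    intro x oa
    have h := fin_le_ciSup (fun oa => Qbstar (some x) oa) oa
    rw [hVBSdef]
    exact h
  have hVS_G : ∀ x, x ∈ G → VS x = 1 := by
    intro x hx
    have h3 : VS x = ⨆ a : A, Qstar x a := by rw [hVSdef]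
    have h2 : ∀ a : A, Qstar x a = 1 := fun a => by rw [hQstar, if_pos hx]
    rw [h3]
    simp only [h2, ciSup_const]
  have hVS_nG : ∀ x, x ∉ G → VS x = ⨆ a : A, γ * pexp (P x a) VS := by
    intro x hx
    have h3 : VS x = ⨆ a : A, Qstar x a := by rw [hVSdef]
    rw [h3]
    refine iSup_congr (fun a => ?_)
    rw [hQstar, if_neg hx]
  have hVS_le1 : ∀ x, VS x ≤ 1 := by
    refine contraction_le_one hγ1 _ (fun M hM hall x => ?_)
    by_cases hx : x ∈ G
    · rw [hVS_G x hx]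
      exact le_max_left _ _
    · rw [hVS_nG x hx]
      refine le_trans (ciSup_le fun a => ?_) (le_max_right _ _)
      exact mul_le_mul_of_nonneg_left (pexp_le_const _ hall) hγ0
  have hVS_0 : ∀ x, 0 ≤ VS x := by
    have hneg : ∀ x, -VS x ≤ 0 := by
      refine contraction_nonpos hγ1 (fun x => -VS x) (fun M hM hall x => ?_)
      by_cases hx : x ∈ G
      · rw [hVS_G x hx]
        linarith [mul_nonneg hγ0 hM]
      · obtain a0 := Classical.arbitrary A
        have h1 : γ * pexp (P x a0) VS ≤ ⨆ a : A, γ * pexp (P x a) VS :=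
          fin_le_ciSup (fun a : A => γ * pexp (P x a) VS) a0
        rw [← hVS_nG x hx] at h1
        have h2 : -M ≤ pexp (P x a0) VS := const_le_pexp _ (fun y => by linarith [hall y])
        nlinarith
    intro x
    linarith [hneg x]
  have hd3 : ∀ x, VBS (some x) - VS x ≤ 0 := by
    refine contraction_nonpos hγ1 _ (fun M hM hall x => ?_)
    have hVBSx : VBS (some x) = ⨆ oa : Option A, Qbstar (some x) oa := by rw [hVBSdef]
    have hsuf : (⨆ oa : Option A, Qbstar (some x) oa) ≤ VS x + γ * M := by
      refine ciSup_le fun oa => ?_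
      cases oa with
      | none =>
        rw [hQbs1]
        by_cases hx : x ∈ G
        · rw [if_pos hx, hVS_G x hx]
          linarith [mul_nonneg hγ0 hM]
        · rw [if_neg hx]
          linarith [hVS_0 x, mul_nonneg hγ0 hM]
      | some a =>
        rw [hQbs2]
        have h1 : pexp (P x a) (fun y => VBS (some y)) ≤ pexp (P x a) (fun y => VS y + M) :=
          pexp_mono _ (fun y => by linarith [hall y])
        rw [pexp_add_const] at h1
        by_cases hx : x ∈ G
        · have h2 : pexp (P x a) VS ≤ 1 := pexp_le_const _ (fun y => hVS_le1 y)
          rw [hVS_G x hx]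
          nlinarith
        · have h2 : γ * pexp (P x a) VS ≤ VS x := by
            rw [hVS_nG x hx]
            exact fin_le_ciSup (fun a => γ * pexp (P x a) VS) a
          nlinarith
    rw [hVBSx]
    linarith
  have hd4 : ∀ x, VS x - VBS (some x) ≤ 0 := by
    refine contraction_nonpos hγ1 _ (fun M hM hall x => ?_)
    by_cases hx : x ∈ G
    · rw [hVS_G x hx]
      have h1 := hQleVBS x none
      rw [hQbs1, if_pos hx] at h1
      linarith [mul_nonneg hγ0 hM]
    · rw [hVS_nG x hx]
      have hsuf : (⨆ a : A, γ * pexp (P x a) VS) ≤ VBS (some x) + γ * M := by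
        refine ciSup_le fun a => ?_
        have h1 : pexp (P x a) VS ≤ pexp (P x a) (fun y => VBS (some y) + M) :=
          pexp_mono _ (fun y => by linarith [hall y])
        rw [pexp_add_const] at h1
        have h2 := hQleVBS x (some a)
        rw [hQbs2] at h2
        nlinarith
      linarith
  have hVBSeq : ∀ x, VBS (some x) = VS x := fun x =>
    le_antisymm (by linarith [hd3 x]) (by linarith [hd4 x])
  constructor
  · rw [pexp_map_some, pexp_map_some, pexp_congr d0 hVBeq, pexp_congr d0 hVBSeq]
  · intro ξ ξr Qξ Qr hξr hQξ hQr hval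
    set Vξ : Option X → ℝ := fun ox => pexp (ξ ox) (Qξ ox) with hVξdef
    set VR : X → ℝ := fun x => pexp (ξr x) (Qr x) with hVRdef
    have hVξ_none : Vξ none = 0 := by
      have h1 : ∀ oa : Option A, Qξ none oa = γ * Vξ none := by
        intro oa
        rw [hQξ, haugR_none, haugP_none, pexp_pure]
        ring
      have h2 : Vξ none = γ * Vξ none := by
        have h3 : Vξ none = pexp (ξ none) (Qξ none) := by rw [hVξdef]
        rw [pexp_congr _ h1, pexp_const] at h3
        exact h3
      exact eq_zero_of_eq_mul hγ1 h2
    have hQξ1 : ∀ x, Qξ (some x) none = if x ∈ G then 1 else 0 := by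
      intro x
      rw [hQξ, haugR_sn, haugP_sn, pexp_pure, hVξ_none]
      ring
    have hQξ2 : ∀ x a, Qξ (some x) (some a) = γ * pexp (P x a) (fun y => Vξ (some y)) := by
      intro x a
      rw [hQξ, haugR_ss, haugP_ss, pexp_map_some]
      ring
    have hVR_G : ∀ x, x ∈ G → VR x = 1 := by
      intro x hx
      have h3 : VR x = pexp (ξr x) (Qr x) := by rw [hVRdef]
      have h2 : ∀ a : A, Qr x a = (fun _ : A => (1 : ℝ)) a := fun a => by rw [hQr, if_pos hx]
      rw [h3, pexp_congr _ h2, pexp_const]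
    have hVR_nG : ∀ x, x ∉ G → VR x = pexp (ξr x) (fun a => γ * pexp (P x a) VR) := by
      intro x hx
      have h3 : VR x = pexp (ξr x) (Qr x) := by rw [hVRdef]
      rw [h3]
      refine pexp_congr _ (fun a => ?_)
      rw [hQr, if_neg hx]
    have hVR_le1 : ∀ x, VR x ≤ 1 := by
      refine contraction_le_one hγ1 _ (fun M hM hall x => ?_)
      by_cases hx : x ∈ G
      · rw [hVR_G x hx]
        exact le_max_left _ _
      · rw [hVR_nG x hx]
        refine le_trans (pexp_le_const _ (fun a => ?_)) (le_max_right _ _)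
        exact mul_le_mul_of_nonneg_left (pexp_le_const _ hall) hγ0
    have hVR_0 : ∀ x, 0 ≤ VR x := by
      have hneg : ∀ x, -VR x ≤ 0 := by
        refine contraction_nonpos hγ1 (fun x => -VR x) (fun M hM hall x => ?_)
        by_cases hx : x ∈ G
        · rw [hVR_G x hx]
          linarith [mul_nonneg hγ0 hM]
        · rw [hVR_nG x hx, ← pexp_neg]
          refine pexp_le_const _ (fun a => ?_)
          have h1 : -M ≤ pexp (P x a) VR := const_le_pexp _ (fun y => by linarith [hall y])
          nlinarith
      intro x
      linarith [hneg x]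
    have hVRVS : ∀ x, VR x - VS x ≤ 0 := by
      refine contraction_nonpos hγ1 _ (fun M hM hall x => ?_)
      by_cases hx : x ∈ G
      · rw [hVR_G x hx, hVS_G x hx]
        simpa using mul_nonneg hγ0 hM
      · have key : ∀ a : A, γ * pexp (P x a) VR ≤ VS x + γ * M := by
          intro a
          have h1 : pexp (P x a) VR ≤ pexp (P x a) (fun y => VS y + M) :=
            pexp_mono _ (fun y => by linarith [hall y])
          rw [pexp_add_const] at h1
          have h2 : γ * pexp (P x a) VS ≤ VS x := by
            rw [hVS_nG x hx]
            exact fin_le_ciSup (fun a => γ * pexp (P x a) VS) a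
          nlinarith
        have h3 : VR x ≤ VS x + γ * M := by
          rw [hVR_nG x hx]
          exact pexp_le_const _ key
        linarith
    have hξVR : ∀ x, Vξ (some x) - VR x ≤ 0 := by
      refine contraction_nonpos hγ1 _ (fun M hM hall x => ?_)
      by_cases hx : x ∈ G
      · have hQbd : ∀ oa : Option A, Qξ (some x) oa ≤ 1 + γ * M := by
          intro oa
          cases oa with
          | none =>
            rw [hQξ1, if_pos hx]
            linarith [mul_nonneg hγ0 hM]
          | some a =>
            rw [hQξ2]
            have h1 : pexp (P x a) (fun y => Vξ (some y))
                ≤ pexp (P x a) (fun y => VR y + M) :=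
              pexp_mono _ (fun y => by linarith [hall y])
            rw [pexp_add_const] at h1
            have h2 : pexp (P x a) VR ≤ 1 := pexp_le_const _ (fun y => hVR_le1 y)
            nlinarith
        have h3 : Vξ (some x) ≤ 1 + γ * M := by
          have h4 : Vξ (some x) = pexp (ξ (some x)) (Qξ (some x)) := by rw [hVξdef]
          rw [h4]
          exact pexp_le_const _ hQbd
        rw [hVR_G x hx]
        linarith
      · have hQr0 : ∀ a, 0 ≤ Qr x a := by
          intro a
          rw [hQr, if_neg hx]
          exact mul_nonneg hγ0 (const_le_pexp _ (fun y => hVR_0 y))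
        have step1 : ∀ oa : Option A,
            Qξ (some x) oa ≤ (fun oa : Option A => oa.elim 0 (Qr x)) oa + γ * M := by
          intro oa
          cases oa with
          | none =>
            rw [hQξ1, if_neg hx]
            simpa using mul_nonneg hγ0 hM
          | some a =>
            simp only [Option.elim]
            rw [hQξ2, hQr, if_neg hx]
            have h1 : pexp (P x a) (fun y => Vξ (some y))
                ≤ pexp (P x a) (fun y => VR y + M) :=
              pexp_mono _ (fun y => by linarith [hall y])
            rw [pexp_add_const] at h1
            nlinarith
        have step2 : pexp (ξ (some x)) (fun oa : Option A => oa.elim 0 (Qr x)) ≤ VR x := by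
          rw [pexp_eq_sum, Fintype.sum_option]
          simp only [Option.elim, mul_zero, zero_add]
          have hVRx : VR x = ∑ a, ((ξ (some x) (some a)).toReal
              + (ξ (some x) none).toReal / (Fintype.card A : ℝ)) * Qr x a := by
            have h5 : VR x = pexp (ξr x) (Qr x) := by rw [hVRdef]
            rw [h5, pexp_eq_sum]
            refine Finset.sum_congr rfl fun a _ => ?_
            congr 1
            rw [hξr]
            rw [ENNReal.toReal_add (PMF.apply_ne_top _ _)
              (ENNReal.div_lt_top (PMF.apply_ne_top _ _)
                (Nat.cast_ne_zero.mpr Fintype.card_ne_zero)).ne,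
              ENNReal.toReal_div]
            simp
          rw [hVRx]
          refine Finset.sum_le_sum fun a _ => ?_
          refine mul_le_mul_of_nonneg_right (le_add_of_nonneg_right ?_) (hQr0 a)
          positivity
        have h4 : Vξ (some x) ≤ VR x + γ * M := by
          have h5 : Vξ (some x) = pexp (ξ (some x)) (Qξ (some x)) := by rw [hVξdef]
          rw [h5]
          calc pexp (ξ (some x)) (Qξ (some x))
              ≤ pexp (ξ (some x)) (fun oa : Option A => oa.elim 0 (Qr x) + γ * M) :=
                pexp_mono _ step1
            _ = pexp (ξ (some x)) (fun oa : Option A => oa.elim 0 (Qr x)) + γ * M :=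
                pexp_add_const _ _ _
            _ ≤ VR x + γ * M := by linarith [step2]
        linarith
    have hfin1 : pexp d0 VR ≤ pexp d0 VS := pexp_mono _ (fun x => by linarith [hVRVS x])
    have hfin2 : pexp d0 (fun x => Vξ (some x)) ≤ pexp d0 VR :=
      pexp_mono _ (fun x => by linarith [hξVR x])
    have hfin3 : pexp (d0.map some) Vξ = pexp d0 (fun x => Vξ (some x)) :=
      pexp_map_some _ _
    have hfin4 : pexp (d0.map some) VBS = pexp d0 VS := by
      rw [pexp_map_some]
      exact pexp_congr _ hVBSeq
    have hge : pexp d0 VS ≤ pexp d0 VR := by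
      rw [← hfin4, ← hval, hfin3]
      exact hfin2
    exact le_antisymm hfin1 hge
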